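/- arXiv:1408.5613 — 2 statements merged into one kernel-verified Lean document; each statement's English description precedes it below -/
import Mathlib

section
/- Let X' = (t',x') ∈ Q, and let R > 0 and 0 < t̄ < t' be such that the closure of B_t̄(X',R) is contained in Q and u(t,x) = min over y ∈ Ω of [(t − t̄) L((x − y)/(t − t̄)) + u(t̄, y)] for each (t,x) ∈ B_t̄(X',R). Then ⟨P₁ − P₂, X₁ − X₂⟩ ≤ 2 L(x₁ − x₂) for every X₁ = (t₁,x₁), X₂ = (t₂,x₂) ∈ B_t̄(X',R) and every P₁ ∈ D⁺v_t̄(X₁), P₂ ∈ D⁺v_t̄(X₂). -/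
/-! On `B_t̄(X',R)` the hypothesis says `v_t̄(t,x) = min_y [L(x - y) + (t - t̄) u(t̄,y)]`. Since
`L(x - y) - L(x)` is affine in `x`, the function `v_t̄ - L(x)` is a minimum of affine functions of
`(t,x)`, hence concave on the convex set `B_t̄(X',R)`. Because `L` is convex with gradient `A⁻¹x`,
`P ∈ D⁺v_t̄(X)` gives `P - (0, A⁻¹x) ∈ D⁺(v_t̄ - L)(X)`, and for a concave function such a local
supergradient is global. Global supergradients of a concave function are monotone, and undoing the
shift costs `⟨A⁻¹(x₁ - x₂), x₁ - x₂⟩ = 2 L(x₁ - x₂)`. -/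

open scoped RealInnerProductSpace
open Filter Topology Set Metric

noncomputable section

/-- The Lagrangian `L(q) = ½ ⟨A⁻¹ q, q⟩`. -/
def Lag {n : ℕ} (A : Matrix (Fin n) (Fin n) ℝ) (q : EuclideanSpace ℝ (Fin n)) : ℝ :=
  (1 / 2) * ⟪Matrix.toEuclideanLin A⁻¹ q, q⟫

/-- The Hamiltonian `H(p) = ½ ⟨A p, p⟩`. -/
def Ham {n : ℕ} (A : Matrix (Fin n) (Fin n) ℝ) (p : EuclideanSpace ℝ (Fin n)) : ℝ :=
  (1 / 2) * ⟪Matrix.toEuclideanLin A p, p⟫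

/-- Euclidean norm on `ℝ × ℝⁿ`. -/
def pnorm {n : ℕ} (V : ℝ × EuclideanSpace ℝ (Fin n)) : ℝ :=
  Real.sqrt (V.1 ^ 2 + ‖V.2‖ ^ 2)

/-- Euclidean pairing on `ℝ × ℝⁿ`. -/
def pairR {n : ℕ} (P V : ℝ × EuclideanSpace ℝ (Fin n)) : ℝ :=
  P.1 * V.1 + ⟪P.2, V.2⟫

/-- Open Euclidean ball in `ℝ × ℝⁿ`. -/
def pball {n : ℕ} (X : ℝ × EuclideanSpace ℝ (Fin n)) (R : ℝ) :
    Set (ℝ × EuclideanSpace ℝ (Fin n)) :=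
  {Y | pnorm (Y - X) < R}

/-- `B_t̄(X,R) = ((t̄,∞) × ℝⁿ) ∩ B(X,R)`. -/
def tball {n : ℕ} (tbar : ℝ) (X : ℝ × EuclideanSpace ℝ (Fin n)) (R : ℝ) :
    Set (ℝ × EuclideanSpace ℝ (Fin n)) :=
  {Y | tbar < Y.1} ∩ pball X R

/-- Superdifferential of `w` at `X`:
`P ∈ D⁺w(X)` iff `limsup_{Y→X} (w(Y)−w(X)−⟨P,Y−X⟩)/|Y−X| ≤ 0`. -/
def superDiff {n : ℕ} (w : ℝ × EuclideanSpace ℝ (Fin n) → ℝ)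
    (X P : ℝ × EuclideanSpace ℝ (Fin n)) : Prop :=
  ∀ ε > 0, ∀ᶠ Y in 𝓝[≠] X, w Y - w X - pairR P (Y - X) ≤ ε * pnorm (Y - X)

lemma pnorm_eq_norm_toLp {n : ℕ} (V : ℝ × EuclideanSpace ℝ (Fin n)) :
    pnorm V = ‖WithLp.toLp 2 V‖ := by
  rw [WithLp.prod_norm_eq_of_L2]
  simp [pnorm]

lemma pnorm_smul {n : ℕ} (c : ℝ) (V : ℝ × EuclideanSpace ℝ (Fin n)) :
    pnorm (c • V) = |c| * pnorm V := by
  rw [pnorm_eq_norm_toLp, pnorm_eq_norm_toLp, WithLp.toLp_smul, norm_smul, Real.norm_eq_abs]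

lemma pairR_sub_left {n : ℕ} (P G V : ℝ × EuclideanSpace ℝ (Fin n)) :
    pairR (P - G) V = pairR P V - pairR G V := by
  simp only [pairR, Prod.fst_sub, Prod.snd_sub, inner_sub_left]
  ring

lemma pairR_smul_right {n : ℕ} (P : ℝ × EuclideanSpace ℝ (Fin n)) (c : ℝ)
    (V : ℝ × EuclideanSpace ℝ (Fin n)) : pairR P (c • V) = c * pairR P V := by
  simp only [pairR, Prod.smul_fst, Prod.smul_snd, smul_eq_mul, real_inner_smul_right]
  ring

lemma pairR_neg_right {n : ℕ} (P V : ℝ × EuclideanSpace ℝ (Fin n)) :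
    pairR P (-V) = -pairR P V := by
  simpa using pairR_smul_right P (-1) V

lemma convex_tball {n : ℕ} (tbar : ℝ) (X : ℝ × EuclideanSpace ℝ (Fin n)) (R : ℝ) :
    Convex ℝ (tball tbar X R) := by
  have hball : pball X R = (WithLp.linearEquiv 2 ℝ _).symm ⁻¹' ball (WithLp.toLp 2 X) R := by
    ext Y
    simp [pball, pnorm_eq_norm_toLp, dist_eq_norm, WithLp.toLp_sub]
  rw [tball, hball]
  exact (convex_halfSpace_gt (LinearMap.fst ℝ ℝ _).isLinear tbar).inter
    ((convex_ball _ _).linear_preimage _)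

lemma tendsto_add_smul_nhdsNE {n : ℕ} {X D : ℝ × EuclideanSpace ℝ (Fin n)} (hD : D ≠ 0) :
    Tendsto (fun s : ℝ => X + s • D) (𝓝[>] 0) (𝓝[≠] X) := by
  refine tendsto_nhdsWithin_iff.mpr ⟨?_, ?_⟩
  · have hc : Continuous fun s : ℝ => X + s • D := by fun_prop
    simpa using (hc.tendsto 0).mono_left nhdsWithin_le_nhds
  · filter_upwards [self_mem_nhdsWithin] with s (hs : 0 < s)
    simpa [hs.ne'] using hD

namespace superDiff

variable {n : ℕ} {w : ℝ × EuclideanSpace ℝ (Fin n) → ℝ} {X P : ℝ × EuclideanSpace ℝ (Fin n)}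

lemma sub {g : ℝ × EuclideanSpace ℝ (Fin n) → ℝ} {G : ℝ × EuclideanSpace ℝ (Fin n)}
    (hP : superDiff w X P) (hg : ∀ Y, g X + pairR G (Y - X) ≤ g Y) :
    superDiff (fun Y => w Y - g Y) X (P - G) := by
  intro ε hε
  filter_upwards [hP ε hε] with Y hY
  rw [pairR_sub_left]
  linarith [hg Y]

lemma le_add_pairR_of_concaveOn {S : Set (ℝ × EuclideanSpace ℝ (Fin n))}
    (hw : ConcaveOn ℝ S w) (hX : X ∈ S) {Y : ℝ × EuclideanSpace ℝ (Fin n)} (hY : Y ∈ S)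
    (hP : superDiff w X P) : w Y ≤ w X + pairR P (Y - X) := by
  rcases eq_or_ne Y X with rfl | hYX
  · simp [pairR]
  have hD : 0 < pnorm (Y - X) := by
    rw [pnorm_eq_norm_toLp]
    simpa [sub_eq_zero] using hYX
  refine le_of_forall_pos_le_add fun ε hε => ?_
  obtain ⟨s, hsup, hs⟩ := ((tendsto_add_smul_nhdsNE (sub_ne_zero.mpr hYX)).eventually
    (hP (ε / pnorm (Y - X)) (by positivity))).and (Ioo_mem_nhdsGT one_pos) |>.exists
  have hconc : (1 - s) • w X + s • w Y ≤ w ((1 - s) • X + s • Y) :=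
    hw.2 hX hY (by linarith [hs.2]) hs.1.le (by ring)
  rw [show (1 - s) • X + s • Y = X + s • (Y - X) by module, smul_eq_mul, smul_eq_mul] at hconc
  simp only [add_sub_cancel_left, pairR_smul_right, pnorm_smul, abs_of_pos hs.1] at hsup
  rw [show ε / pnorm (Y - X) * (s * pnorm (Y - X)) = s * ε by field_simp] at hsup
  nlinarith [hs.1]

lemma pairR_sub_nonpos_of_concaveOn {S : Set (ℝ × EuclideanSpace ℝ (Fin n))}
    (hw : ConcaveOn ℝ S w) {X₁ X₂ P₁ P₂ : ℝ × EuclideanSpace ℝ (Fin n)} (h₁ : X₁ ∈ S)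
    (h₂ : X₂ ∈ S) (hP₁ : superDiff w X₁ P₁) (hP₂ : superDiff w X₂ P₂) :
    pairR (P₁ - P₂) (X₁ - X₂) ≤ 0 := by
  have e₁ := hP₁.le_add_pairR_of_concaveOn hw h₁ h₂
  have e₂ := hP₂.le_add_pairR_of_concaveOn hw h₂ h₁
  rw [← neg_sub X₂ X₁, pairR_neg_right] at e₂
  rw [pairR_sub_left, ← neg_sub X₂ X₁, pairR_neg_right, pairR_neg_right]
  linarith

end superDiff

lemma ConcaveOn.of_forall_le_of_exists_eq {𝕜 E β ι : Type*} [Semiring 𝕜] [PartialOrder 𝕜]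
    [AddCommMonoid E] [SMul 𝕜 E] [AddCommMonoid β] [PartialOrder β] [IsOrderedAddMonoid β]
    [SMul 𝕜 β] [PosSMulMono 𝕜 β] {s : Set E} {f : E → β} {g : ι → E → β} (hs : Convex 𝕜 s)
    (hg : ∀ i, ConcaveOn 𝕜 s (g i)) (hle : ∀ x ∈ s, ∀ i, f x ≤ g i x)
    (heq : ∀ x ∈ s, ∃ i, g i x = f x) : ConcaveOn 𝕜 s f := by
  refine ⟨hs, fun x hx y hy a b ha hb hab => ?_⟩
  obtain ⟨i, hi⟩ := heq _ (hs hx hy ha hb hab)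
  rw [← hi]
  exact (add_le_add (smul_le_smul_of_nonneg_left (hle x hx i) ha)
    (smul_le_smul_of_nonneg_left (hle y hy i) hb)).trans ((hg i).2 hx hy ha hb hab)

lemma concaveOn_pairR_add_const {n : ℕ} {S : Set (ℝ × EuclideanSpace ℝ (Fin n))}
    (hS : Convex ℝ S) (P : ℝ × EuclideanSpace ℝ (Fin n)) (c : ℝ) :
    ConcaveOn ℝ S (fun Z => pairR P Z + c) := by
  refine ⟨hS, fun X _ Y _ a b _ _ hab => le_of_eq ?_⟩
  simp only [pairR, Prod.fst_add, Prod.snd_add, Prod.smul_fst, Prod.smul_snd, smul_eq_mul,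
    inner_add_right, real_inner_smul_right]
  linear_combination c * hab

section Lag

variable {n : ℕ} {A : Matrix (Fin n) (Fin n) ℝ}

lemma lag_smul (c : ℝ) (q : EuclideanSpace ℝ (Fin n)) : Lag A (c • q) = c ^ 2 * Lag A q := by
  simp only [Lag, map_smul, real_inner_smul_left, real_inner_smul_right]
  ring

lemma lag_nonneg (hA : A⁻¹.PosSemidef) (q : EuclideanSpace ℝ (Fin n)) : 0 ≤ Lag A q :=
  mul_nonneg (by norm_num)
    ((Matrix.isPositive_toEuclideanLin_iff.mpr hA).inner_nonneg_left q)

lemma lag_sub (hA : A⁻¹.PosSemidef) (a b : EuclideanSpace ℝ (Fin n)) :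
    Lag A (a - b) = Lag A a - ⟪Matrix.toEuclideanLin A⁻¹ b, a⟫ + Lag A b := by
  have hsymm : ⟪Matrix.toEuclideanLin A⁻¹ a, b⟫ = ⟪Matrix.toEuclideanLin A⁻¹ b, a⟫ := by
    rw [(Matrix.isPositive_toEuclideanLin_iff.mpr hA).isSymmetric, real_inner_comm]
  simp only [Lag, map_sub, inner_sub_left, inner_sub_right]
  linarith

lemma lag_add_inner_le (hA : A⁻¹.PosSemidef) (a b : EuclideanSpace ℝ (Fin n)) :
    Lag A a + ⟪Matrix.toEuclideanLin A⁻¹ a, b - a⟫ ≤ Lag A b := by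
  have h := lag_sub hA b a
  have h0 := lag_nonneg hA (b - a)
  rw [inner_sub_right]
  simp only [Lag] at h h0 ⊢
  linarith

end Lag

lemma concaveOn_mul_sub_lag {n : ℕ} {Ω : Set (EuclideanSpace ℝ (Fin n))}
    {A : Matrix (Fin n) (Fin n) ℝ} (hA : A⁻¹.PosSemidef) {u : ℝ × EuclideanSpace ℝ (Fin n) → ℝ}
    {tbar : ℝ} {S : Set (ℝ × EuclideanSpace ℝ (Fin n))} (hS : Convex ℝ S)
    (hSt : ∀ Z ∈ S, tbar < Z.1)
    (hmin : ∀ Z ∈ S, IsLeast {v | ∃ y ∈ Ω,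
      v = (Z.1 - tbar) * Lag A ((Z.1 - tbar)⁻¹ • (Z.2 - y)) + u (tbar, y)} (u Z)) :
    ConcaveOn ℝ S (fun Z => (Z.1 - tbar) * u Z - Lag A Z.2) := by
  set g : Ω → ℝ × EuclideanSpace ℝ (Fin n) → ℝ := fun y Z =>
    pairR (u (tbar, y), -Matrix.toEuclideanLin A⁻¹ y) Z + (Lag A y - tbar * u (tbar, y))
  have hrepr : ∀ Z ∈ S, ∀ y : Ω, (Z.1 - tbar) *
      ((Z.1 - tbar) * Lag A ((Z.1 - tbar)⁻¹ • (Z.2 - y)) + u (tbar, y)) - Lag A Z.2 = g y Z := by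
    intro Z hZ y
    have hc : Z.1 - tbar ≠ 0 := (sub_pos.mpr (hSt Z hZ)).ne'
    rw [lag_smul, lag_sub hA]
    simp only [g, pairR, inner_neg_left]
    field_simp
    ring
  refine ConcaveOn.of_forall_le_of_exists_eq (g := g) hS
    (fun y => concaveOn_pairR_add_const hS _ _) (fun Z hZ y => ?_) (fun Z hZ => ?_)
  · rw [← hrepr Z hZ y]
    exact sub_le_sub_right (mul_le_mul_of_nonneg_left ((hmin Z hZ).2 ⟨y, y.2, rfl⟩)
      (sub_pos.mpr (hSt Z hZ)).le) _
  · obtain ⟨y, hy, hEq⟩ := (hmin Z hZ).1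
    exact ⟨⟨y, hy⟩, by rw [← hrepr Z hZ, hEq]⟩

theorem statement1_general
    {n : ℕ}
    (Ω : Set (EuclideanSpace ℝ (Fin n)))
    (A : Matrix (Fin n) (Fin n) ℝ) (hA : A.PosDef)
    (u : ℝ × EuclideanSpace ℝ (Fin n) → ℝ)
    (t' : ℝ) (x' : EuclideanSpace ℝ (Fin n))
    (R : ℝ) (tbar : ℝ)
    (hmin : ∀ X ∈ tball tbar (t', x') R,
      IsLeast {v | ∃ y ∈ Ω,
        v = (X.1 - tbar) * Lag A ((X.1 - tbar)⁻¹ • (X.2 - y)) + u (tbar, y)} (u X))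
    (X₁ X₂ : ℝ × EuclideanSpace ℝ (Fin n))
    (h₁ : X₁ ∈ tball tbar (t', x') R) (h₂ : X₂ ∈ tball tbar (t', x') R)
    (P₁ P₂ : ℝ × EuclideanSpace ℝ (Fin n))
    (hP₁ : superDiff (fun X => (X.1 - tbar) * u X) X₁ P₁)
    (hP₂ : superDiff (fun X => (X.1 - tbar) * u X) X₂ P₂) :
    pairR (P₁ - P₂) (X₁ - X₂) ≤ 2 * Lag A (X₁.2 - X₂.2) := by
  set T := Matrix.toEuclideanLin A⁻¹
  have hA' : A⁻¹.PosSemidef := hA.inv.posSemidef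
  have hconc := concaveOn_mul_sub_lag hA' (convex_tball tbar (t', x') R) (fun Z hZ => hZ.1) hmin
  have hgrad (X Y : ℝ × EuclideanSpace ℝ (Fin n)) :
      Lag A X.2 + pairR (0, T X.2) (Y - X) ≤ Lag A Y.2 := by
    simpa [pairR] using lag_add_inner_le hA' X.2 Y.2
  have hmono := superDiff.pairR_sub_nonpos_of_concaveOn hconc h₁ h₂
    (hP₁.sub (hgrad X₁)) (hP₂.sub (hgrad X₂))
  have hshift : pairR (P₁ - (0, T X₁.2) - (P₂ - (0, T X₂.2))) (X₁ - X₂) =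
      pairR (P₁ - P₂) (X₁ - X₂) - 2 * Lag A (X₁.2 - X₂.2) := by
    simp only [pairR, Lag, Prod.fst_sub, Prod.snd_sub, map_sub, inner_sub_left, sub_zero]
    ring
  linarith

/-- Lemma 3.2: sharp monotonicity estimate for the superdifferential of
`v_t̄(t,x) = (t − t̄) u(t,x)`: `⟨P₁ − P₂, X₁ − X₂⟩ ≤ 2 L(x₁ − x₂)`. -/
theorem statement1
    {n : ℕ} (hn : 1 ≤ n)
    (Ω : Set (EuclideanSpace ℝ (Fin n))) (hΩo : IsOpen Ω)
    (hΩb : Bornology.IsBounded Ω)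
    (A : Matrix (Fin n) (Fin n) ℝ) (hA : A.PosDef)
    (Q : Set (ℝ × EuclideanSpace ℝ (Fin n))) (hQ : Q = Ioi (0 : ℝ) ×ˢ Ω)
    (φ u : ℝ × EuclideanSpace ℝ (Fin n) → ℝ)
    (hφ : ∃ K, LipschitzOnWith K φ (frontier Q))
    (hcomp : ∀ t x s y, (t, x) ∈ frontier Q → (s, y) ∈ frontier Q → 0 ≤ s → s < t →
      φ (t, x) - φ (s, y) ≤ (t - s) * Lag A ((t - s)⁻¹ • (x - y)))
    (hu : ∀ X ∈ closure Q, IsLeast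
      {v | ∃ s y, (s, y) ∈ frontier Q ∧ s < X.1 ∧
        v = (X.1 - s) * Lag A ((X.1 - s)⁻¹ • (X.2 - y)) + φ (s, y)} (u X))
    (t' : ℝ) (x' : EuclideanSpace ℝ (Fin n)) (hX' : (t', x') ∈ Q)
    (R : ℝ) (hR : 0 < R) (tbar : ℝ) (htbar0 : 0 < tbar) (htbar : tbar < t')
    (hcl : closure (tball tbar (t', x') R) ⊆ Q)
    (hmin : ∀ X ∈ tball tbar (t', x') R,
      IsLeast {v | ∃ y ∈ Ω,
        v = (X.1 - tbar) * Lag A ((X.1 - tbar)⁻¹ • (X.2 - y)) + u (tbar, y)} (u X))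
    (X₁ X₂ : ℝ × EuclideanSpace ℝ (Fin n))
    (h₁ : X₁ ∈ tball tbar (t', x') R) (h₂ : X₂ ∈ tball tbar (t', x') R)
    (P₁ P₂ : ℝ × EuclideanSpace ℝ (Fin n))
    (hP₁ : superDiff (fun X => (X.1 - tbar) * u X) X₁ P₁)
    (hP₂ : superDiff (fun X => (X.1 - tbar) * u X) X₂ P₂) :
    pairR (P₁ - P₂) (X₁ - X₂) ≤ 2 * Lag A (X₁.2 - X₂.2) :=
  statement1_general Ω A hA u t' x' R tbar hmin X₁ X₂ h₁ h₂ P₁ P₂ hP₁ hP₂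
end
end

section
/- Let X' = (t',x') ∈ Q, and let R > 0 and 0 < t̄ < t' be such that u(t,x) = min over y ∈ Ω of [(t − t̄) L((x − y)/(t − t̄)) + u(t̄, y)] for each (t,x) ∈ B_t̄(X',R). Let X₁ = (t₁,x₁), X₂ = (t₂,x₂) ∈ B_t̄(X',R), and let y₁, y₂ ∈ Ω attain the respective minima, i.e. u(tᵢ,xᵢ) = (tᵢ − t̄) L((xᵢ − yᵢ)/(tᵢ − t̄)) + u(t̄, yᵢ) for i = 1,2. Then (u(t̄,y₁) − u(t̄,y₂))(t₁ − t₂) + ⟨∇L(x₁ − y₁) − ∇L(x₂ − y₂), x₁ − x₂⟩ ≤ 2 L(x₁ − x₂), where ∇L(q) = A⁻¹q. -/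
open scoped RealInnerProductSpace
open Filter Topology Set Metric

noncomputable section

lemma Lag_smul {n : ℕ} (A : Matrix (Fin n) (Fin n) ℝ) (c : ℝ)
    (q : EuclideanSpace ℝ (Fin n)) : Lag A (c • q) = c ^ 2 * Lag A q := by
  simp only [Lag, map_smul, inner_smul_left, inner_smul_right, RCLike.star_def,
    starRingEnd_apply, star_trivial]
  ring

lemma Lag_sym {n : ℕ} {A : Matrix (Fin n) (Fin n) ℝ} (hA : A.PosDef)
    (q d : EuclideanSpace ℝ (Fin n)) :
    ⟪Matrix.toEuclideanLin A⁻¹ d, q⟫ = ⟪Matrix.toEuclideanLin A⁻¹ q, d⟫ := by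
  have h : (A⁻¹).conjTranspose = A⁻¹ := hA.isHermitian.inv
  have h2 := Matrix.toEuclideanLin_conjTranspose_eq_adjoint (A⁻¹)
  rw [h] at h2
  calc ⟪Matrix.toEuclideanLin A⁻¹ d, q⟫
      = ⟪LinearMap.adjoint (Matrix.toEuclideanLin A⁻¹) d, q⟫ := by rw [← h2]
    _ = ⟪d, Matrix.toEuclideanLin A⁻¹ q⟫ := LinearMap.adjoint_inner_left _ _ _
    _ = ⟪Matrix.toEuclideanLin A⁻¹ q, d⟫ := real_inner_comm _ _

lemma Lag_add {n : ℕ} {A : Matrix (Fin n) (Fin n) ℝ} (hA : A.PosDef)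
    (q d : EuclideanSpace ℝ (Fin n)) :
    Lag A (q + d) = Lag A q + ⟪Matrix.toEuclideanLin A⁻¹ q, d⟫ + Lag A d := by
  simp only [Lag, map_add, inner_add_left, inner_add_right]
  rw [Lag_sym hA q d]
  ring

/-- the key inequality in the proof of Lemma 3.2: if `y₁, y₂` attain
the minima in the representation formula at `X₁ = (t₁,x₁)` and `X₂ = (t₂,x₂)`, then
`(u(t̄,y₁) − u(t̄,y₂))(t₁ − t₂) + ⟨∇L(x₁−y₁) − ∇L(x₂−y₂), x₁ − x₂⟩ ≤ 2L(x₁ − x₂)`. -/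
theorem statement15
    {n : ℕ} (hn : 1 ≤ n)
    (Ω : Set (EuclideanSpace ℝ (Fin n))) (hΩo : IsOpen Ω)
    (hΩb : Bornology.IsBounded Ω)
    (A : Matrix (Fin n) (Fin n) ℝ) (hA : A.PosDef)
    (Q : Set (ℝ × EuclideanSpace ℝ (Fin n))) (hQ : Q = Ioi (0 : ℝ) ×ˢ Ω)
    (φ u : ℝ × EuclideanSpace ℝ (Fin n) → ℝ)
    (hφ : ∃ K, LipschitzOnWith K φ (frontier Q))
    (hcomp : ∀ t x s y, (t, x) ∈ frontier Q → (s, y) ∈ frontier Q → 0 ≤ s → s < t →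
      φ (t, x) - φ (s, y) ≤ (t - s) * Lag A ((t - s)⁻¹ • (x - y)))
    (hu : ∀ X ∈ closure Q, IsLeast
      {v | ∃ s y, (s, y) ∈ frontier Q ∧ s < X.1 ∧
        v = (X.1 - s) * Lag A ((X.1 - s)⁻¹ • (X.2 - y)) + φ (s, y)} (u X))
    (t' : ℝ) (x' : EuclideanSpace ℝ (Fin n)) (hX' : (t', x') ∈ Q)
    (R : ℝ) (hR : 0 < R) (tbar : ℝ) (htbar0 : 0 < tbar) (htbar : tbar < t')
    (hmin : ∀ X ∈ tball tbar (t', x') R,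
      IsLeast {v | ∃ y ∈ Ω,
        v = (X.1 - tbar) * Lag A ((X.1 - tbar)⁻¹ • (X.2 - y)) + u (tbar, y)} (u X))
    (t₁ t₂ : ℝ) (x₁ x₂ : EuclideanSpace ℝ (Fin n))
    (h₁ : (t₁, x₁) ∈ tball tbar (t', x') R) (h₂ : (t₂, x₂) ∈ tball tbar (t', x') R)
    (y₁ y₂ : EuclideanSpace ℝ (Fin n)) (hy₁ : y₁ ∈ Ω) (hy₂ : y₂ ∈ Ω)
    (hmin₁ : u (t₁, x₁) = (t₁ - tbar) * Lag A ((t₁ - tbar)⁻¹ • (x₁ - y₁)) + u (tbar, y₁))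
    (hmin₂ : u (t₂, x₂) = (t₂ - tbar) * Lag A ((t₂ - tbar)⁻¹ • (x₂ - y₂)) + u (tbar, y₂)) :
    (u (tbar, y₁) - u (tbar, y₂)) * (t₁ - t₂) +
      ⟪Matrix.toEuclideanLin A⁻¹ (x₁ - y₁) - Matrix.toEuclideanLin A⁻¹ (x₂ - y₂),
        x₁ - x₂⟫ ≤ 2 * Lag A (x₁ - x₂) := by
  have hs₁ : (0:ℝ) < t₁ - tbar := sub_pos.2 h₁.1
  have hs₂ : (0:ℝ) < t₂ - tbar := sub_pos.2 h₂.1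
  have hscale : ∀ (s : ℝ), 0 < s → ∀ q : EuclideanSpace ℝ (Fin n),
      s * Lag A (s⁻¹ • q) = s⁻¹ * Lag A q := by
    intro s hs q
    rw [Lag_smul]
    field_simp
  have key₁ : Lag A (x₁ - y₁) + (t₁ - tbar) * u (tbar, y₁) ≤
      Lag A (x₁ - y₂) + (t₁ - tbar) * u (tbar, y₂) := by
    have h := (hmin _ h₁).2 ⟨y₂, hy₂, rfl⟩
    rw [hmin₁] at h
    simp only [hscale _ hs₁] at h
    have h' := mul_le_mul_of_nonneg_left h hs₁.le
    rw [mul_add, mul_add, ← mul_assoc, ← mul_assoc,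
      mul_inv_cancel₀ hs₁.ne', one_mul, one_mul] at h'
    exact h'
  have key₂ : Lag A (x₂ - y₂) + (t₂ - tbar) * u (tbar, y₂) ≤
      Lag A (x₂ - y₁) + (t₂ - tbar) * u (tbar, y₁) := by
    have h := (hmin _ h₂).2 ⟨y₁, hy₁, rfl⟩
    rw [hmin₂] at h
    simp only [hscale _ hs₂] at h
    have h' := mul_le_mul_of_nonneg_left h hs₂.le
    rw [mul_add, mul_add, ← mul_assoc, ← mul_assoc,
      mul_inv_cancel₀ hs₂.ne', one_mul, one_mul] at h'
    exact h'
  have e₁ : x₁ - y₂ = (x₂ - y₂) + (x₁ - x₂) := by abel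
  have e₂ : x₂ - y₁ = (x₁ - y₁) + (x₂ - x₁) := by abel
  have e₃ : x₂ - x₁ = -(x₁ - x₂) := by abel
  have E₁ : Lag A (x₁ - y₂) = Lag A (x₂ - y₂) +
      ⟪Matrix.toEuclideanLin A⁻¹ (x₂ - y₂), x₁ - x₂⟫ + Lag A (x₁ - x₂) := by
    rw [e₁, Lag_add hA]
  have Lneg : Lag A (-(x₁ - x₂)) = Lag A (x₁ - x₂) := by
    rw [← neg_one_smul ℝ (x₁ - x₂), Lag_smul]; ring
  have E₂ : Lag A (x₂ - y₁) = Lag A (x₁ - y₁) -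
      ⟪Matrix.toEuclideanLin A⁻¹ (x₁ - y₁), x₁ - x₂⟫ + Lag A (x₁ - x₂) := by
    rw [e₂, Lag_add hA, e₃, inner_neg_right, Lneg]; ring
  rw [inner_sub_left]
  nlinarith [key₁, key₂, E₁, E₂]
end
end
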